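/- Let G be a finite simple graph and let S ⊆ V(G) with |S| ≤ 4 be such that every vertex of V(G) − S having a neighbor in S has degree at least 4 in G. Then φ(G) ≥ φ(G − S) + Σ_{u ∈ S} φ(deg_G(u)) + (1/2)·e_G(S), where e_G(S) is the number of edges of G between S and V(G) − S, φ(G) = Σ_{v ∈ V(G)} φ(deg_G(v)), and φ(d) = 0 for d ∈ {0,1,2}, φ(3) = 4/3, φ(d) = d/2 for d ≥ 4. -/
import Mathlib


open SimpleGraph

/-- The potential function: `φ(d) = 0` for `d ∈ {0,1,2}`, `φ(3) = 4/3`, and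
`φ(d) = d/2` for `d ≥ 4`. -/
noncomputable def phi (d : ℕ) : ℝ :=
  if d ≤ 2 then 0 else if d = 3 then 4 / 3 else (d : ℝ) / 2

/-- The potential of a graph: `φ(G) = Σ_{v ∈ V(G)} φ(deg_G(v))`. -/
noncomputable def phiSum {V : Type*} [Fintype V] (G : SimpleGraph V) : ℝ :=
  ∑ v : V, phi ((G.neighborSet v).ncard)

/-- `e_G(S)`: the number of edges of `G` with one endpoint in `S` and the other
outside `S`. -/
noncomputable def crossingEdges {V : Type*} (G : SimpleGraph V) (S : Finset V) : ℕ :=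
  {e : Sym2 V | ∃ a b : V, e = s(a, b) ∧ G.Adj a b ∧ a ∈ S ∧ b ∉ S}.ncard

lemma phi_le_half (k : ℕ) : phi k ≤ (k : ℝ) / 2 := by
  unfold phi
  split_ifs with h1 h2
  · positivity
  · subst h2; norm_num
  · exact le_rfl

theorem statement18 {V : Type*} [Fintype V] [DecidableEq V] (G : SimpleGraph V)
    (S : Finset V) (hScard : S.card ≤ 4)
    (hdeg : ∀ v : V, v ∉ S → (∃ u ∈ S, G.Adj v u) → 4 ≤ (G.neighborSet v).ncard) :
    phiSum G ≥ phiSum (G.induce ((↑S : Set V)ᶜ))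
      + (∑ u ∈ S, phi ((G.neighborSet u).ncard))
      + (1 / 2) * (crossingEdges G S : ℝ) := by
  classical
  -- notation
  set A : Set V := (↑S : Set V) with hA
  -- degree as finset card
  have hncard : ∀ v : V, (G.neighborSet v).ncard = (G.neighborFinset v).card := by
    intro v
    rw [SimpleGraph.neighborFinset_def, Set.ncard_eq_toFinset_card']
  -- cS and cO
  set cS : V → ℕ := fun v => (G.neighborFinset v ∩ S).card with hcS
  set cO : V → ℕ := fun v => (G.neighborFinset v \ S).card with hcO
  have hsplit : ∀ v : V, (G.neighborSet v).ncard = cS v + cO v := by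
    intro v
    rw [hncard v, ← Finset.card_inter_add_card_sdiff (G.neighborFinset v) S]
  -- induced degree
  have hind : ∀ w : ↥Aᶜ, ((G.induce Aᶜ).neighborSet w).ncard = cO (w : V) := by
    intro w
    have himg : Subtype.val '' ((G.induce Aᶜ).neighborSet w)
        = (↑(G.neighborFinset (w : V) \ S) : Set V) := by
      ext x
      simp only [Set.mem_image, SimpleGraph.mem_neighborSet, Finset.coe_sdiff,
        Set.mem_diff, Finset.mem_coe, SimpleGraph.mem_neighborFinset]
      constructor
      · rintro ⟨y, hy, rfl⟩
        have hya : (y : V) ∈ Aᶜ := y.2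
        simp only [hA, Set.mem_compl_iff, Finset.mem_coe] at hya
        exact ⟨(by simpa using hy), hya⟩
      · rintro ⟨hadj, hx⟩
        refine ⟨⟨x, by simpa [hA] using hx⟩, by simpa using hadj, rfl⟩
    have := Set.ncard_image_of_injective ((G.induce Aᶜ).neighborSet w)
      (Subtype.val_injective)
    rw [← this, himg, Set.ncard_coe_finset]
  -- crossing edges
  have hcross : crossingEdges G S = ∑ v ∈ Sᶜ, cS v := by
    set T : Finset (Sym2 V) :=
      Sᶜ.biUnion (fun v => (G.neighborFinset v ∩ S).image (fun a => s(a, v))) with hT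
    have hset : {e : Sym2 V | ∃ a b : V, e = s(a, b) ∧ G.Adj a b ∧ a ∈ S ∧ b ∉ S}
        = (↑T : Set (Sym2 V)) := by
      ext e
      simp only [Set.mem_setOf_eq, hT, Finset.coe_biUnion, Set.mem_iUnion,
        Finset.mem_coe, Finset.mem_compl, Finset.mem_image, Finset.mem_inter,
        SimpleGraph.mem_neighborFinset]
      constructor
      · rintro ⟨a, b, rfl, hadj, haS, hbS⟩
        exact ⟨b, hbS, a, ⟨hadj.symm, haS⟩, Sym2.eq_swap.symm ▸ rfl⟩
      · rintro ⟨v, hv, a, ⟨hadj, haS⟩, rfl⟩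
        exact ⟨a, v, rfl, hadj.symm, haS, hv⟩
    have hcard : T.card = ∑ v ∈ Sᶜ, cS v := by
      rw [hT, Finset.card_biUnion]
      · refine Finset.sum_congr rfl ?_
        intro v hv
        rw [Finset.card_image_of_injOn]
        intro a ha a' ha' hEq
        simp only [Finset.mem_coe, Finset.mem_inter] at ha ha'
        rcases Sym2.eq_iff.mp hEq with ⟨h1, _⟩ | ⟨h1, h2⟩
        · exact h1
        · exfalso; exact (Finset.mem_compl.mp hv) (h2 ▸ ha'.2)
      · intro v hv v' hv' hne
        simp only [Finset.disjoint_left, Finset.mem_image, Finset.mem_inter,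
          SimpleGraph.mem_neighborFinset]
        rintro e ⟨a, ⟨_, haS⟩, rfl⟩ ⟨a', ⟨_, haS'⟩, hEq⟩
        rcases Sym2.eq_iff.mp hEq with ⟨_, h2⟩ | ⟨h1, _⟩
        · exact hne h2.symm
        · exact (Finset.mem_compl.mp hv) (h1 ▸ haS')
    rw [crossingEdges, hset, Set.ncard_coe_finset, hcard]
  -- per-vertex inequality on Sᶜ
  have hvert : ∀ v ∈ Sᶜ, phi (cO v) + (cS v : ℝ) / 2 ≤ phi ((G.neighborSet v).ncard) := by
    intro v hv
    have hvS : v ∉ S := Finset.mem_compl.mp hv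
    by_cases h0 : cS v = 0
    · rw [hsplit v, h0, zero_add]
      simp
    · have hne : (G.neighborFinset v ∩ S).Nonempty :=
        Finset.card_pos.mp (Nat.pos_of_ne_zero h0)
      obtain ⟨u, hu⟩ := hne
      rw [Finset.mem_inter, SimpleGraph.mem_neighborFinset] at hu
      have h4 : 4 ≤ (G.neighborSet v).ncard := hdeg v hvS ⟨u, hu.2, hu.1⟩
      have hphi : phi ((G.neighborSet v).ncard) = ((G.neighborSet v).ncard : ℝ) / 2 := by
        unfold phi
        rw [if_neg (by omega), if_neg (by omega)]
      rw [hphi, hsplit v]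
      push_cast
      have := phi_le_half (cO v)
      linarith
  -- sum over Sᶜ
  have hsumineq : ∑ v ∈ Sᶜ, (phi (cO v) + (cS v : ℝ) / 2)
      ≤ ∑ v ∈ Sᶜ, phi ((G.neighborSet v).ncard) :=
    Finset.sum_le_sum hvert
  -- phiSum of induced graph
  have hindsum : phiSum (G.induce Aᶜ) = ∑ v ∈ Sᶜ, phi (cO v) := by
    rw [phiSum]
    rw [← Finset.sum_coe_sort (Sᶜ) (fun v => phi (cO v))]
    refine Fintype.sum_equiv (Equiv.subtypeEquivRight ?_) _ _ ?_
    · intro x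
      simp [hA]
    · intro w
      rw [hind w]
      rfl
  -- phiSum split
  have hGsum : phiSum G = (∑ u ∈ S, phi ((G.neighborSet u).ncard))
      + ∑ v ∈ Sᶜ, phi ((G.neighborSet v).ncard) := by
    rw [phiSum, ← Finset.sum_add_sum_compl S]
  rw [hGsum, hindsum, hcross]
  push_cast
  rw [Finset.mul_sum]
  have : ∑ v ∈ Sᶜ, (phi (cO v) + (cS v : ℝ) / 2)
      = ∑ v ∈ Sᶜ, phi (cO v) + ∑ v ∈ Sᶜ, (cS v : ℝ) / 2 := Finset.sum_add_distrib
  have h2 : ∑ v ∈ Sᶜ, (1 / 2 : ℝ) * (cS v : ℝ) = ∑ v ∈ Sᶜ, (cS v : ℝ) / 2 := by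
    refine Finset.sum_congr rfl fun v _ => by ring
  rw [h2]
  linarith [hsumineq, this]
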